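/- arXiv:2310.18280 — 3 statements merged into one kernel-verified Lean document; each statement's English description precedes it below -/
import Mathlib

section
/- Stability of the self-consistent equation: fix ℓ > 0 and κ > 0, let γ_a = c_ℓ² and γ_b = c_ℓ√(ℓ!κ) if ℓ ∈ ℕ (both 0 otherwise) for some real c_ℓ, and let γ_c ≥ 0. Fix z ∈ ℍ with η = Im z. Suppose 𝔰 ∈ ℍ satisfies 1/𝔰 + z + γ_a·𝔰/(1 + γ_b·𝔰) + γ_c·𝔰 = ω with |ω| ≤ η/2, and 𝔪 ∈ ℍ is the unique solution in ℍ of 1/𝔪 + z + γ_a·𝔪/(1 + γ_b·𝔪) + γ_c·𝔪 = 0. Then |𝔰 − 𝔪| ≤ 4|ω|/η². -/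
/-!
Write `F(w) = 1/w + z + γa w/(1 + γb w) + γc w`, so that `F 𝔰 = ω` and `F 𝔪 = 0`. Then
`F w - F w' = (w - w') D` with `D = γc + γa/((1 + γb w)(1 + γb w')) - 1/(w w')`, and it suffices to
bound `‖D‖` from below. As `γa = cl² ≥ 0`, the imaginary part of `F` shows that `Im F(w) ≤ η - δ`
with `δ ≥ 0` forces `δ/Im w + γa/|1 + γb w|² + γc ≤ 1/|w|² ≤ 1/(Im w)²`, hence `δ ≤ 1/Im w` and
`δ² + γa/|1 + γb w|² + γc ≤ 1/|w|²`. Cauchy–Schwarz for the vectors `(δ, √γa/|1 + γb w|, √γc)`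
then yields `δ δ' ≤ 1/(|w||w'|) - γa/|(1 + γb w)(1 + γb w')| - γc ≤ ‖D‖`. Take `δ = η/2` for `𝔰`
and `δ' = η` for `𝔪`.
-/

open scoped Classical

noncomputable section

open Complex

def selfConsistentMap (γa γb γc : ℝ) (z w : ℂ) : ℂ :=
  1 / w + z + (γa : ℂ) * w / (1 + (γb : ℂ) * w) + (γc : ℂ) * w

lemma one_add_ofReal_mul_ne_zero (b : ℝ) {w : ℂ} (hw : 0 < w.im) : 1 + (b : ℂ) * w ≠ 0 := by
  intro h
  have hb : b = 0 := by simpa [hw.ne'] using congrArg Complex.im h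
  simp [hb] at h

lemma selfConsistentMap_im (γa γb γc : ℝ) (z w : ℂ) :
    (selfConsistentMap γa γb γc z w).im =
      z.im - w.im * (1 / ‖w‖ ^ 2 - γa / ‖1 + (γb : ℂ) * w‖ ^ 2 - γc) := by
  simp only [selfConsistentMap, Complex.sq_norm, add_im, div_im, mul_im, mul_re, one_re, one_im,
    ofReal_re, ofReal_im, add_re, normSq_apply]
  ring

lemma selfConsistentMap_sub_selfConsistentMap (γa γb γc : ℝ) (z : ℂ) {w w' : ℂ} (hw : w ≠ 0)
    (hw' : w' ≠ 0) (hA : 1 + (γb : ℂ) * w ≠ 0) (hA' : 1 + (γb : ℂ) * w' ≠ 0) :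
    selfConsistentMap γa γb γc z w - selfConsistentMap γa γb γc z w' =
      (w - w') * ((γc : ℂ) + γa / ((1 + γb * w) * (1 + γb * w')) - 1 / (w * w')) := by
  simp only [selfConsistentMap, div_eq_mul_inv, one_mul, mul_inv]
  linear_combination w'⁻¹ * mul_inv_cancel₀ hw - w⁻¹ * mul_inv_cancel₀ hw' +
    γa * (w' * (1 + γb * w')⁻¹ * mul_inv_cancel₀ hA - w * (1 + γb * w)⁻¹ * mul_inv_cancel₀ hA')

lemma mul_add_mul_add_mul_le_of_sq_le {x u c y v c' a b : ℝ} (ha : 0 ≤ a) (hb : 0 ≤ b)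
    (hxa : x ^ 2 + u ^ 2 + c ^ 2 ≤ a ^ 2) (hyb : y ^ 2 + v ^ 2 + c' ^ 2 ≤ b ^ 2) :
    x * y + u * v + c * c' ≤ a * b := by
  have hcs : (x * y + u * v + c * c') ^ 2 ≤ (a * b) ^ 2 :=
    calc (x * y + u * v + c * c') ^ 2 ≤ (x ^ 2 + u ^ 2 + c ^ 2) * (y ^ 2 + v ^ 2 + c' ^ 2) := by
          nlinarith [sq_nonneg (x * v - u * y), sq_nonneg (x * c' - c * y),
            sq_nonneg (u * c' - c * v)]
      _ ≤ (a * b) ^ 2 := by rw [mul_pow]; gcongr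
  exact le_of_abs_le (abs_le_of_sq_le_sq hcs (mul_nonneg ha hb))

section Stability

variable {γa γb γc δ δ' : ℝ} {z w w' : ℂ}

lemma sq_add_le_inv_sq_norm (hγa : 0 ≤ γa) (hγc : 0 ≤ γc) (hw : 0 < w.im) (hδ : 0 ≤ δ)
    (hδw : δ ≤ z.im - (selfConsistentMap γa γb γc z w).im) :
    δ ^ 2 + γa / ‖1 + (γb : ℂ) * w‖ ^ 2 + γc ≤ 1 / ‖w‖ ^ 2 := by
  rw [selfConsistentMap_im] at hδw
  set g := 1 / ‖w‖ ^ 2 - γa / ‖1 + (γb : ℂ) * w‖ ^ 2 - γc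
  have hδg : δ / w.im ≤ g := by rw [div_le_iff₀ hw]; linarith
  have hg : g ≤ 1 / w.im ^ 2 := by
    have : w.im ^ 2 ≤ ‖w‖ ^ 2 := by
      gcongr
      exact (le_abs_self _).trans (abs_im_le_norm w)
    have : 0 ≤ γa / ‖1 + (γb : ℂ) * w‖ ^ 2 := by positivity
    calc g ≤ 1 / ‖w‖ ^ 2 := by linarith
      _ ≤ 1 / w.im ^ 2 := by gcongr
  have hδim : δ * w.im ≤ 1 := by
    have := hδg.trans hg
    rw [div_le_div_iff₀ hw (by positivity)] at this
    nlinarith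
  have hδsq : δ ^ 2 ≤ δ / w.im := by
    rw [le_div_iff₀ hw]; nlinarith
  linarith

lemma mul_le_norm_of_im_le (hγa : 0 ≤ γa) (hγc : 0 ≤ γc) (hw : 0 < w.im) (hw' : 0 < w'.im)
    (hδ : 0 ≤ δ) (hδ' : 0 ≤ δ')
    (hδw : δ ≤ z.im - (selfConsistentMap γa γb γc z w).im)
    (hδw' : δ' ≤ z.im - (selfConsistentMap γa γb γc z w').im) :
    δ * δ' ≤ ‖(γc : ℂ) + γa / ((1 + γb * w) * (1 + γb * w')) - 1 / (w * w')‖ := by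
  set A := ‖1 + (γb : ℂ) * w‖
  set A' := ‖1 + (γb : ℂ) * w'‖
  have hA : 0 < A := norm_pos_iff.2 (one_add_ofReal_mul_ne_zero γb hw)
  have hA' : 0 < A' := norm_pos_iff.2 (one_add_ofReal_mul_ne_zero γb hw')
  have hsq (t : ℝ) (ht : 0 ≤ t) (r : ℝ) : (√t / r) ^ 2 = t / r ^ 2 := by
    rw [div_pow, Real.sq_sqrt ht]
  have hcs : δ * δ' + √γa / A * (√γa / A') + √γc * √γc ≤ 1 / ‖w‖ * (1 / ‖w'‖) := by
    apply mul_add_mul_add_mul_le_of_sq_le (by positivity) (by positivity)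
    · rw [hsq γa hγa, Real.sq_sqrt hγc, div_pow, one_pow]
      exact sq_add_le_inv_sq_norm hγa hγc hw hδ hδw
    · rw [hsq γa hγa, Real.sq_sqrt hγc, div_pow, one_pow]
      exact sq_add_le_inv_sq_norm hγa hγc hw' hδ' hδw'
  have hprod : √γa / A * (√γa / A') + √γc * √γc = γa / (A * A') + γc := by
    rw [Real.mul_self_sqrt hγc, div_mul_div_comm, Real.mul_self_sqrt hγa]
  have hnorm : ‖(γc : ℂ) + γa / ((1 + γb * w) * (1 + γb * w'))‖ ≤ γc + γa / (A * A') := by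
    refine (norm_add_le _ _).trans_eq ?_
    rw [norm_div, norm_mul, norm_real, norm_real, Real.norm_of_nonneg hγc,
      Real.norm_of_nonneg hγa]
  have hinv : ‖1 / (w * w')‖ = 1 / ‖w‖ * (1 / ‖w'‖) := by
    rw [norm_div, norm_one, norm_mul, one_div_mul_one_div]
  calc δ * δ' ≤ ‖1 / (w * w')‖ - ‖(γc : ℂ) + γa / ((1 + γb * w) * (1 + γb * w'))‖ := by
        linarith
    _ ≤ _ := by rw [norm_sub_rev]; exact norm_sub_norm_le _ _

theorem mul_norm_sub_le_norm_selfConsistentMap_sub (hγa : 0 ≤ γa) (hγc : 0 ≤ γc)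
    (hw : 0 < w.im) (hw' : 0 < w'.im) (hδ : 0 ≤ δ) (hδ' : 0 ≤ δ')
    (hδw : δ ≤ z.im - (selfConsistentMap γa γb γc z w).im)
    (hδw' : δ' ≤ z.im - (selfConsistentMap γa γb γc z w').im) :
    δ * δ' * ‖w - w'‖ ≤
      ‖selfConsistentMap γa γb γc z w - selfConsistentMap γa γb γc z w'‖ := by
  have hw0 : w ≠ 0 := fun h => by simp [h] at hw
  have hw0' : w' ≠ 0 := fun h => by simp [h] at hw'
  rw [selfConsistentMap_sub_selfConsistentMap γa γb γc z hw0 hw0'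
    (one_add_ofReal_mul_ne_zero γb hw) (one_add_ofReal_mul_ne_zero γb hw'), norm_mul, mul_comm]
  gcongr
  exact mul_le_norm_of_im_le hγa hγc hw hw' hδ hδ' hδw hδw'

end Stability

theorem self_consistent_stability_general
    (ℓ κ : ℝ)
    (cl : ℝ) (γa γb : ℝ)
    (hγint : ∀ m : ℕ, (m : ℝ) = ℓ →
      γa = cl ^ 2 ∧ γb = cl * Real.sqrt (Nat.factorial m * κ))
    (hγnint : (¬ ∃ m : ℕ, (m : ℝ) = ℓ) → γa = 0 ∧ γb = 0)
    (γc : ℝ) (hγc : 0 ≤ γc)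
    (z 𝔰 𝔪 ω : ℂ) (hz : 0 < z.im) (h𝔰 : 0 < 𝔰.im)
    (heq : 1 / 𝔰 + z + (γa : ℂ) * 𝔰 / (1 + (γb : ℂ) * 𝔰) + (γc : ℂ) * 𝔰 = ω)
    (hω : ‖ω‖ ≤ z.im / 2)
    (h𝔪 : 0 < 𝔪.im)
    (h𝔪eq : 1 / 𝔪 + z + (γa : ℂ) * 𝔪 / (1 + (γb : ℂ) * 𝔪) + (γc : ℂ) * 𝔪 = 0) :
    ‖𝔰 - 𝔪‖ ≤ 4 * ‖ω‖ / z.im ^ 2 := by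
  have hγa : 0 ≤ γa := by
    by_cases h : ∃ m : ℕ, (m : ℝ) = ℓ
    · obtain ⟨m, hm⟩ := h
      rw [(hγint m hm).1]
      positivity
    · rw [(hγnint h).1]
  have h𝔰gap : z.im / 2 ≤ z.im - (selfConsistentMap γa γb γc z 𝔰).im := by
    rw [selfConsistentMap, heq]
    linarith [(le_abs_self _).trans (abs_im_le_norm ω)]
  have h𝔪gap : z.im ≤ z.im - (selfConsistentMap γa γb γc z 𝔪).im := by
    rw [selfConsistentMap, h𝔪eq, zero_im, sub_zero]
  have hbound := mul_norm_sub_le_norm_selfConsistentMap_sub hγa hγc h𝔰 h𝔪 (by positivity)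
    hz.le h𝔰gap h𝔪gap
  rw [selfConsistentMap, selfConsistentMap, heq, h𝔪eq, sub_zero] at hbound
  rw [le_div_iff₀ (by positivity)]
  nlinarith [norm_nonneg (𝔰 - 𝔪), norm_nonneg ω]

/-- stability of the self-consistent equation, Proposition 9 of
Lu–Yau as quoted in Lemma 3.5 of the paper. If `𝔰 ∈ ℍ` approximately solves the
self-consistent equation, with error `ω` satisfying `|ω| ≤ η/2`, and `𝔪 ∈ ℍ` is
the unique exact solution, then `|𝔰 − 𝔪| ≤ 4|ω|/η²`. -/
theorem self_consistent_stability
    (ℓ κ : ℝ) (hℓ : 0 < ℓ) (hκ : 0 < κ)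
    (cl : ℝ) (γa γb : ℝ)
    (hγint : ∀ m : ℕ, (m : ℝ) = ℓ →
      γa = cl ^ 2 ∧ γb = cl * Real.sqrt (Nat.factorial m * κ))
    (hγnint : (¬ ∃ m : ℕ, (m : ℝ) = ℓ) → γa = 0 ∧ γb = 0)
    (γc : ℝ) (hγc : 0 ≤ γc)
    (z 𝔰 𝔪 ω : ℂ) (hz : 0 < z.im) (h𝔰 : 0 < 𝔰.im)
    (heq : 1 / 𝔰 + z + (γa : ℂ) * 𝔰 / (1 + (γb : ℂ) * 𝔰) + (γc : ℂ) * 𝔰 = ω)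
    (hω : ‖ω‖ ≤ z.im / 2)
    (h𝔪 : 0 < 𝔪.im)
    (h𝔪eq : 1 / 𝔪 + z + (γa : ℂ) * 𝔪 / (1 + (γb : ℂ) * 𝔪) + (γc : ℂ) * 𝔪 = 0)
    (h𝔪uniq : ∀ w : ℂ, 0 < w.im →
      1 / w + z + (γa : ℂ) * w / (1 + (γb : ℂ) * w) + (γc : ℂ) * w = 0 → w = 𝔪) :
    ‖𝔰 - 𝔪‖ ≤ 4 * ‖ω‖ / z.im ^ 2 :=
  self_consistent_stability_general ℓ κ cl γa γb hγint hγnint γc hγc z 𝔰 𝔪 ω hz h𝔰 heq hω h𝔪 h𝔪eq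
end
end

section
/- Resolvent identity for the linearization: let M, N be positive integers, T ∈ ℝ^{M×M} an invertible diagonal matrix, U ∈ ℝ^{M×N}, D the N×N diagonal matrix with D_{ii} = U_i^⊤ T U_i (U_i the i-th column of U), and z ∈ ℂ with Im(z) > 0. Set B = U^⊤ T U − D and G_N = (B − zI_N)^{−1}, and suppose the matrix U(zI_N + D)^{−1}U^⊤ − T^{−1} is invertible with inverse G_M. Then G_M + T = T·U·G_N·U^⊤·T. -/
open Matrix
open scoped Classical

noncomputable section

lemma diag_isUnit {n : Type*} [Fintype n] [DecidableEq n] (v : n → ℂ)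
    (hv : ∀ i, v i ≠ 0) : IsUnit (Matrix.diagonal v) := by
  rw [Matrix.isUnit_iff_isUnit_det, Matrix.det_diagonal]
  exact isUnit_iff_ne_zero.mpr (Finset.prod_ne_zero_iff.mpr fun i _ => hv i)

lemma hermitian_sub_smul_isUnit {n : Type*} [Fintype n] [DecidableEq n]
    (B : Matrix n n ℂ) (hB : Bᴴ = B) (z : ℂ) (hz : z.im ≠ 0) :
    IsUnit (B - z • 1) := by
  rw [← Matrix.mulVec_injective_iff_isUnit]
  intro x y hxy
  have hsub : (B - z • 1) *ᵥ (x - y) = 0 := by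
    rw [Matrix.mulVec_sub, hxy, sub_self]
  set u := x - y with hu
  suffices h : u = 0 by exact sub_eq_zero.mp h
  by_contra hne
  have hBu : B *ᵥ u = z • u := by
    rw [Matrix.sub_mulVec, sub_eq_zero] at hsub
    rw [hsub, Matrix.smul_mulVec, Matrix.one_mulVec]
  set S := star u ⬝ᵥ (B *ᵥ u) with hS
  have hSreal : star S = S := by
    calc star S = star (star u ⬝ᵥ B *ᵥ u) := by rw [hS]
      _ = star (star (star (B *ᵥ u) ⬝ᵥ u)) := by rw [Matrix.star_dotProduct]
      _ = star (B *ᵥ u) ⬝ᵥ u := star_star _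
      _ = (star u ᵥ* Bᴴ) ⬝ᵥ u := by rw [Matrix.star_mulVec]
      _ = star u ⬝ᵥ (Bᴴ *ᵥ u) := (Matrix.dotProduct_mulVec _ _ _).symm
      _ = S := by rw [hB]
  have hSval : S = z * (star u ⬝ᵥ u) := by
    rw [hS, hBu, dotProduct_smul, smul_eq_mul]
  have huu : star u ⬝ᵥ u = ((∑ i, Complex.normSq (u i) : ℝ) : ℂ) := by
    push_cast
    simp [dotProduct, Complex.normSq_eq_conj_mul_self]
  have huu_re : (0:ℝ) < ∑ i, Complex.normSq (u i) := by
    have hex : ∃ i, u i ≠ 0 := by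
      by_contra hc
      push_neg at hc
      exact hne (funext hc)
    obtain ⟨i, hi⟩ := hex
    exact Finset.sum_pos' (fun j _ => Complex.normSq_nonneg _)
      ⟨i, Finset.mem_univ i, Complex.normSq_pos.mpr hi⟩
  have him : S.im = 0 := by
    have := congrArg Complex.im hSreal
    simp only [Complex.star_def, Complex.conj_im] at this
    linarith
  rw [hSval, huu, Complex.mul_im] at him
  simp only [Complex.ofReal_re, Complex.ofReal_im, mul_zero, add_zero] at him
  have h2 : z.im * ∑ i, Complex.normSq (u i) = 0 := by linarith
  rcases mul_eq_zero.mp h2 with h | h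
  · exact hz h
  · exact (ne_of_gt huu_re) h

/-- resolvent identity (4.4) of the paper. With `T` an invertible
real diagonal matrix, `U` real, `D` the diagonal matrix with `D_{ii} = U_i^⊤ T U_i`,
`B = U^⊤ T U − D`, `G_N = (B − z)⁻¹` (over ℂ, `Im z > 0`), and `G_M` a two-sided
inverse of `U(z+D)⁻¹U^⊤ − T⁻¹`, one has `G_M + T = T U G_N U^⊤ T`. -/
theorem resolvent_identity_GM_plus_T
    (M N : ℕ) (hM : 0 < M) (hN : 0 < N)
    (t : Fin M → ℝ) (ht : ∀ μ, t μ ≠ 0)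
    (U : Matrix (Fin M) (Fin N) ℝ)
    (z : ℂ) (hz : 0 < z.im)
    (T : Matrix (Fin M) (Fin M) ℂ) (hT : T = (Matrix.diagonal t).map (fun x => (x : ℂ)))
    (Uc : Matrix (Fin M) (Fin N) ℂ) (hU : Uc = U.map (fun x => (x : ℂ)))
    (D : Matrix (Fin N) (Fin N) ℂ)
    (hD : D = Matrix.diagonal (fun i => ((∑ μ : Fin M, t μ * (U μ i) ^ 2 : ℝ) : ℂ)))
    (B : Matrix (Fin N) (Fin N) ℂ) (hB : B = Ucᵀ * T * Uc - D)
    (GN : Matrix (Fin N) (Fin N) ℂ) (hGN : GN = (B - z • 1)⁻¹)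
    (GM : Matrix (Fin M) (Fin M) ℂ)
    (hGM₁ : (Uc * (z • 1 + D)⁻¹ * Ucᵀ - T⁻¹) * GM = 1)
    (hGM₂ : GM * (Uc * (z • 1 + D)⁻¹ * Ucᵀ - T⁻¹) = 1) :
    GM + T = T * Uc * GN * Ucᵀ * T := by
  set A := Uc * (z • 1 + D)⁻¹ * Ucᵀ - T⁻¹ with hA
  set W := (z • 1 + D)⁻¹ with hW
  have hTdiag : T = Matrix.diagonal (fun μ => (t μ : ℂ)) := by
    rw [hT, Matrix.diagonal_map (by simp)]
  have hTunit : IsUnit T :=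
    hTdiag ▸ diag_isUnit _ (fun μ => by exact_mod_cast ht μ)
  have hTinv : T⁻¹ * T = 1 :=
    Matrix.nonsing_inv_mul _ ((Matrix.isUnit_iff_isUnit_det _).mp hTunit)
  set d : Fin N → ℝ := fun i => ∑ μ : Fin M, t μ * (U μ i) ^ 2 with hd
  have hzD : z • 1 + D = Matrix.diagonal (fun i => z + (d i : ℂ)) := by
    rw [hD, Matrix.smul_one_eq_diagonal, Matrix.diagonal_add]
  have hzDne : ∀ i, z + (d i : ℂ) ≠ 0 := by
    intro i h
    have := congrArg Complex.im h
    simp at this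
    exact absurd this (ne_of_gt hz)
  have hzDunit : IsUnit (z • 1 + D) := hzD ▸ diag_isUnit _ hzDne
  have hzDinv : W * (z • 1 + D) = 1 :=
    Matrix.nonsing_inv_mul _ ((Matrix.isUnit_iff_isUnit_det _).mp hzDunit)
  -- B hermitian
  have hUcH : Ucᴴ = Ucᵀ := by
    rw [hU]; ext i j; simp [Matrix.conjTranspose_apply, Matrix.map_apply]
  have hUcTH : (Ucᵀ)ᴴ = Uc := by
    rw [hU]; ext i j; simp [Matrix.conjTranspose_apply, Matrix.map_apply]
  have hTH : Tᴴ = T := by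
    rw [hTdiag]; ext i j
    by_cases h : i = j
    · simp [Matrix.conjTranspose_apply, Matrix.diagonal_apply, h]
    · simp [Matrix.conjTranspose_apply, Matrix.diagonal_apply, h, Ne.symm h]
  have hDH : Dᴴ = D := by
    rw [hD]; ext i j
    by_cases h : i = j
    · simp [Matrix.conjTranspose_apply, Matrix.diagonal_apply, h]
    · simp [Matrix.conjTranspose_apply, Matrix.diagonal_apply, h, Ne.symm h]
  have hBsym : Bᴴ = B := by
    rw [hB, Matrix.conjTranspose_sub, Matrix.conjTranspose_mul, Matrix.conjTranspose_mul,
      hUcH, hTH, hDH, hUcTH, Matrix.mul_assoc, ← Matrix.mul_assoc]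
  have hBzunit : IsUnit (B - z • 1) :=
    hermitian_sub_smul_isUnit B hBsym z (ne_of_gt hz)
  have hGNr : (B - z • 1) * GN = 1 := by
    rw [hGN]
    exact Matrix.mul_nonsing_inv _ ((Matrix.isUnit_iff_isUnit_det _).mp hBzunit)
  -- key identity
  have hBD : Ucᵀ * (T * Uc) = B + D := by
    rw [← Matrix.mul_assoc, hB]; abel
  have hkey : A * T * Uc = Uc * (W * (B - z • 1)) := by
    have e1 : A * T * Uc = Uc * (W * (Ucᵀ * (T * Uc))) - Uc := by
      rw [hA, Matrix.sub_mul, Matrix.sub_mul, hTinv, Matrix.one_mul]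
      simp only [Matrix.mul_assoc]
    have e2 : B + D = (B - z • 1) + (z • 1 + D) := by abel
    rw [e1, hBD, e2, Matrix.mul_add, hzDinv, Matrix.mul_add, Matrix.mul_one,
      add_sub_cancel_right]
  have hmain : A * (T * Uc * GN * Ucᵀ * T) = A * T + 1 := by
    calc A * (T * Uc * GN * Ucᵀ * T)
        = (A * T * Uc) * (GN * (Ucᵀ * T)) := by simp only [Matrix.mul_assoc]
      _ = Uc * (W * ((B - z • 1) * (GN * (Ucᵀ * T)))) := by
          rw [hkey]; simp only [Matrix.mul_assoc]
      _ = Uc * (W * (Ucᵀ * T)) := by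
          rw [← Matrix.mul_assoc (B - z • 1) GN, hGNr, Matrix.one_mul]
      _ = A * T + 1 := by
          have e3 : Uc * (W * (Ucᵀ * T)) = Uc * W * Ucᵀ * T := by
            simp only [Matrix.mul_assoc]
          rw [e3, hA, Matrix.sub_mul, hTinv]
          abel
  have h2 : GM * (A * (T * Uc * GN * Ucᵀ * T)) = GM * (A * T) + GM := by
    rw [hmain, Matrix.mul_add, Matrix.mul_one]
  rw [← Matrix.mul_assoc GM A (T * Uc * GN * Ucᵀ * T), ← Matrix.mul_assoc GM A T,
    hGM₂, Matrix.one_mul, Matrix.one_mul] at h2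
  rw [h2]; abel
end
end

section
/- In the linearized setup, let B_j denote the j-th column of B with the (j,j) entry removed. Then max_{j=1}^N ‖B_j‖ ≺ 1. -/
open MeasureTheory ProbabilityTheory Filter Matrix
open scoped Classical BigOperators ENNReal

noncomputable section

/-- The index set 𝐌 (restricted to levels `k` with `lo ≤ k ≤ L` and `c k ≠ 0`),
where a strictly increasing `k`-tuple in `{1,…,d}` is encoded as a `k`-element
subset of `Fin d`. -/
abbrev RIdx (d lo L : ℕ) (c : ℕ → ℝ) : Type :=
  {s : Finset (Fin d) // lo ≤ s.card ∧ s.card ≤ L ∧ c s.card ≠ 0}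

/-- The matrix `U`, with `U_{μ i} = N^{-1/2} ∏_{a ∈ μ} X_{a i}`. -/
def Umat (d n lo L : ℕ) (c : ℕ → ℝ) (X : Matrix (Fin d) (Fin n) ℝ) :
    Matrix (RIdx d lo L c) (Fin n) ℝ :=
  fun p i => (Real.sqrt n)⁻¹ * ∏ a ∈ p.1, X a i

/-- The diagonal value `T_μ = c_k √(k!) √(N/d^k)` for `μ ∈ 𝐌_k`. -/
def Tval (d n : ℕ) (c : ℕ → ℝ) (k : ℕ) : ℝ :=
  c k * Real.sqrt (Nat.factorial k) * Real.sqrt ((n : ℝ) / (d : ℝ) ^ k)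

/-- The deterministic diagonal matrix `T`. -/
def Tmat (d n lo L : ℕ) (c : ℕ → ℝ) : Matrix (RIdx d lo L c) (RIdx d lo L c) ℝ :=
  Matrix.diagonal fun p => Tval d n c p.1.card

/-- The diagonal matrix `D` with `D_{ii} = U_i^⊤ T U_i`. -/
def Dmat (d n lo L : ℕ) (c : ℕ → ℝ) (X : Matrix (Fin d) (Fin n) ℝ) :
    Matrix (Fin n) (Fin n) ℝ :=
  Matrix.diagonal fun i =>
    ∑ p : RIdx d lo L c, Tval d n c p.1.card * (Umat d n lo L c X p i) ^ 2

/-- The matrix `B = U^⊤ T U − D`. -/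
def Bmat (d n lo L : ℕ) (c : ℕ → ℝ) (X : Matrix (Fin d) (Fin n) ℝ) :
    Matrix (Fin n) (Fin n) ℝ :=
  (Umat d n lo L c X)ᵀ * Tmat d n lo L c * Umat d n lo L c X - Dmat d n lo L c X

/-- The resolvent `G_N(z) = (B − z)⁻¹` (as a complex matrix). -/
def GNres (d n lo L : ℕ) (c : ℕ → ℝ) (X : Matrix (Fin d) (Fin n) ℝ) (z : ℂ) :
    Matrix (Fin n) (Fin n) ℂ :=
  ((Bmat d n lo L c X).map (fun x => (x : ℂ)) - z • 1)⁻¹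

/-- The minor `G_M^{(E)}(z) = (U^{(E)} (z + D^{(E)})⁻¹ (U^{(E)})^⊤ − T⁻¹)⁻¹`,
where the columns indexed by the exclusion set `E` are removed (original labels
are kept). -/
def GME (d n lo L : ℕ) (c : ℕ → ℝ) (X : Matrix (Fin d) (Fin n) ℝ)
    (E : Finset (Fin n)) (z : ℂ) :
    Matrix (RIdx d lo L c) (RIdx d lo L c) ℂ :=
  let UE : Matrix (RIdx d lo L c) {i : Fin n // i ∉ E} ℂ :=
    fun p i => ((Umat d n lo L c X p i.1 : ℝ) : ℂ)
  let DE : Matrix {i : Fin n // i ∉ E} {i : Fin n // i ∉ E} ℂ :=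
    Matrix.diagonal fun i => (((Dmat d n lo L c X) i.1 i.1 : ℝ) : ℂ)
  (UE * (z • 1 + DE)⁻¹ * UEᵀ - ((Tmat d n lo L c).map (fun x => (x : ℂ)))⁻¹)⁻¹

/-- `G_M(z)` (no exclusion). -/
def GMres (d n lo L : ℕ) (c : ℕ → ℝ) (X : Matrix (Fin d) (Fin n) ℝ) (z : ℂ) :
    Matrix (RIdx d lo L c) (RIdx d lo L c) ℂ :=
  GME d n lo L c X ∅ z

/-- `s(z) = (1/N) tr G_N(z)`. -/
def sFun (d n lo L : ℕ) (c : ℕ → ℝ) (X : Matrix (Fin d) (Fin n) ℝ) (z : ℂ) : ℂ :=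
  (GNres d n lo L c X z).trace / n

/-- `s̃(z) = (1/M) tr (G_M(z) + T)`. -/
def sTilFun (d n lo L : ℕ) (c : ℕ → ℝ) (X : Matrix (Fin d) (Fin n) ℝ) (z : ℂ) : ℂ :=
  ((GMres d n lo L c X z) + (Tmat d n lo L c).map (fun x => (x : ℂ))).trace /
    (Fintype.card (RIdx d lo L c))

/-- `φ = M/N`. -/
def phiVal (d n lo L : ℕ) (c : ℕ → ℝ) : ℝ := (Fintype.card (RIdx d lo L c) : ℝ) / n

/-!
For `i ≠ j`, `B_ij = ∑_μ (T_μ / N) ∏_{a ∈ μ} X_{ai} X_{aj}`. Expanding `E[B_ij ^ 2p]` over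
`2p`-tuples of index sets, a tuple contributes only if every row `a` it touches is touched at
least twice, because the entries are centred. The weights then decay like `d^{-|A|}` in the
number `|A|` of touched rows, which beats the `d^{|A|}` choices of `A`; hence
`E[B_ij ^ 2p] ≤ C_p N^{-p}` uniformly in `d`. A column with `‖B_j‖ ≥ N^ε` has an entry with
`B_ij² > N^{2ε-1}`, so Markov's inequality and a union bound over the `N²` pairs conclude.
-/

open Finset

section Multiplicity

variable {ι α : Type*} [Fintype ι] [DecidableEq α]

lemma Finset.prod_prod_eq_prod_pow_card [Fintype α] {M : Type*} [CommMonoid M]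
    (s : ι → Finset α) (f : α → M) :
    ∏ t, ∏ a ∈ s t, f a = ∏ a, f a ^ #{t | a ∈ s t} := by
  simp_rw [← Fintype.prod_ite_mem (s _)]
  rw [prod_comm]
  simp_rw [← prod_filter, prod_const]

lemma Finset.two_mul_card_biUnion_le_sum_card (s : ι → Finset α)
    (h : ∀ a, #{t | a ∈ s t} ≠ 1) :
    2 * #(univ.biUnion s) ≤ ∑ t, #(s t) := by
  rw [sum_card_eq_sum_biUnion_card, mul_comm, ← smul_eq_mul, ← sum_const]
  refine sum_le_sum fun a ha => ?_
  have hpos : 0 < #{t | t ∈ univ ∧ a ∈ s t} := by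
    obtain ⟨t, -, hat⟩ := mem_biUnion.mp ha
    exact card_pos.mpr ⟨t, by simp [hat]⟩
  have := h a
  simp only [mem_univ, true_and] at hpos ⊢
  omega

lemma Finset.card_filter_biUnion_eq_le [Fintype α] {β : Type*} [Fintype β]
    {F : β → ι → Finset α} (hF : Function.Injective F) (J : Finset α) :
    #{b | univ.biUnion (F b) = J} ≤ (2 ^ Fintype.card ι) ^ #J := by
  calc #{b | univ.biUnion (F b) = J}
      ≤ #(Fintype.piFinset fun _ : ι => J.powerset) := by
        refine card_le_card_of_injOn F (fun b hb => ?_) hF.injOn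
        simp only [coe_filter, mem_univ, true_and, Set.mem_ofPred_eq] at hb
        simp only [mem_coe, Fintype.mem_piFinset, mem_powerset, ← hb]
        exact fun t => subset_biUnion_of_mem _ (mem_univ t)
    _ = (2 ^ Fintype.card ι) ^ #J := by
        rw [Fintype.card_piFinset, prod_const, card_powerset, card_univ, ← pow_mul,
          ← pow_mul, mul_comm]

lemma Finset.sum_pow_card_biUnion_le [Fintype α] {β : Type*} [Fintype β]
    {F : β → ι → Finset α} (hF : Function.Injective F) {x : ℝ} (hx : 0 ≤ x) :
    ∑ b, x ^ #(univ.biUnion (F b)) ≤ (2 ^ Fintype.card ι * x + 1) ^ Fintype.card α := by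
  calc ∑ b, x ^ #(univ.biUnion (F b))
      = ∑ J : Finset α, #{b | univ.biUnion (F b) = J} * x ^ #J := by
        rw [← sum_fiberwise univ (fun b => univ.biUnion (F b))]
        refine sum_congr rfl fun J _ => ?_
        rw [sum_congr rfl fun b hb => by rw [(mem_filter.mp hb).2], sum_const, nsmul_eq_mul]
    _ ≤ ∑ J : Finset α, ((2 : ℝ) ^ Fintype.card ι) ^ #J * x ^ #J := by
        gcongr with J
        exact_mod_cast card_filter_biUnion_eq_le hF J
    _ = (2 ^ Fintype.card ι * x + 1) ^ Fintype.card α := by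
        rw [← Fintype.sum_pow_mul_eq_add_pow]
        simp [mul_pow]

end Multiplicity

lemma div_add_one_pow_le_exp (d : ℕ) {y : ℝ} (hy : 0 ≤ y) : (y / d + 1) ^ d ≤ Real.exp y := by
  have h := Real.one_sub_div_pow_le_exp_neg (n := d) (t := -y)
    (by linarith [(Nat.cast_nonneg d : (0 : ℝ) ≤ d)])
  rwa [neg_neg, neg_div, sub_neg_eq_add, add_comm] at h

lemma exists_ne_div_lt_sq_of_le_sqrt_sum_sq {n : ℕ} (y : Fin n → ℝ) (j : Fin n) {t : ℝ}
    (ht : 0 < t) (h : t ≤ √(∑ i ∈ univ.erase j, y i ^ 2)) :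
    ∃ i ≠ j, t ^ 2 / n < y i ^ 2 := by
  have hn : (0 : ℝ) < n := by exact_mod_cast j.pos
  have hsum : ∑ _i ∈ univ.erase j, t ^ 2 / n < ∑ i ∈ univ.erase j, y i ^ 2 := by
    rw [sum_const, card_erase_of_mem (mem_univ j), card_univ,
      Fintype.card_fin, nsmul_eq_mul, Nat.cast_pred j.pos]
    calc ((n : ℝ) - 1) * (t ^ 2 / n) < t ^ 2 := by
          rw [mul_div_assoc', div_lt_iff₀ hn]; nlinarith
      _ ≤ _ := Real.le_sqrt' ht |>.mp h
  obtain ⟨i, hi, hlt⟩ := exists_lt_of_sum_lt hsum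
  exact ⟨i, ne_of_mem_erase hi, hlt⟩

lemma natCast_sq_mul_div_le_mul_rpow_neg (n p : ℕ) {C ε D : ℝ} (hC : 0 ≤ C) (hD : 0 < D)
    (hp : D + 2 ≤ 2 * p * ε) :
    (n : ℝ) ^ 2 * (C / n ^ p / (((n : ℝ) ^ ε) ^ 2 / n) ^ p) ≤ C * (n : ℝ) ^ (-D) := by
  rcases n.eq_zero_or_pos with rfl | hn
  · simp [Real.zero_rpow (neg_ne_zero.mpr hD.ne')]
  have hx : (0 : ℝ) < n := by exact_mod_cast hn
  have hpow : ((n : ℝ) ^ ε) ^ (2 * p) = (n : ℝ) ^ (2 * p * ε) := by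
    rw [← Real.rpow_natCast, ← Real.rpow_mul hx.le, mul_comm ε]
    push_cast; ring_nf
  calc (n : ℝ) ^ 2 * (C / n ^ p / (((n : ℝ) ^ ε) ^ 2 / n) ^ p)
      = C * ((n : ℝ) ^ (2 : ℝ) / (n : ℝ) ^ (2 * p * ε)) := by
        rw [div_pow, ← pow_mul, hpow, Real.rpow_two]
        field_simp
    _ = C * (n : ℝ) ^ (2 - 2 * p * ε) := by rw [Real.rpow_sub hx]
    _ ≤ C * (n : ℝ) ^ (-D) := by
        gcongr
        · exact_mod_cast hn
        · linarith

section Moments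

variable {Ω : Type*} [MeasurableSpace Ω] {P : Measure Ω}

lemma ProbabilityTheory.iIndepFun.integrable_finsetProd {ι : Type*} {X : ι → Ω → ℝ}
    (hX : iIndepFun X P) (hXm : ∀ i, Measurable (X i)) (hXi : ∀ i, Integrable (X i) P)
    (s : Finset ι) : Integrable (fun ω => ∏ i ∈ s, X i ω) P := by
  have := hX.isProbabilityMeasure
  induction s using Finset.induction with
  | empty => simp
  | insert i s hi ih =>
    simp_rw [prod_insert hi]
    have hind : IndepFun (X i) (∏ k ∈ s, X k) P :=
      (hX.indepFun_finsetProd_of_notMem hXm hi).symm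
    convert hind.integrable_mul (hXi i) (by simpa only [prod_fn] using ih) using 1
    ext ω
    simp only [Pi.mul_apply, prod_apply]

variable {μ0 : Measure ℝ} {g : Ω → ℝ}

lemma integrable_pow_of_map_eq (hmom : ∀ p : ℕ, Integrable (fun x => |x| ^ p) μ0)
    (hg : Measurable g) (hlaw : P.map g = μ0) (e : ℕ) : Integrable (fun ω => g ω ^ e) P := by
  have hμ : Integrable (fun x : ℝ => x ^ e) μ0 :=
    (integrable_norm_iff (by fun_prop)).mp (by simpa [norm_pow] using hmom e)
  exact (hlaw ▸ hμ).comp_measurable hg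

lemma integral_pow_of_map_eq (hg : Measurable g) (hlaw : P.map g = μ0) (e : ℕ) :
    ∫ ω, g ω ^ e ∂P = ∫ x, x ^ e ∂μ0 := by
  rw [← hlaw, integral_map hg.aemeasurable (by fun_prop)]

end Moments

section Tail

variable {Ω : Type*} [MeasurableSpace Ω] {P : Measure Ω} [IsFiniteMeasure P]

lemma measure_le_sq_le_of_integral_pow_le {Y : Ω → ℝ} {p : ℕ} {C τ : ℝ} (hτ : 0 < τ)
    (hint : Integrable (fun ω => Y ω ^ (2 * p)) P) (hC : ∫ ω, Y ω ^ (2 * p) ∂P ≤ C) :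
    P {ω | τ ≤ Y ω ^ 2} ≤ ENNReal.ofReal (C / τ ^ p) := by
  have hmarkov := mul_meas_ge_le_integral_of_nonneg
    (ae_of_all _ fun ω => by simp only [Pi.zero_apply, pow_mul]; positivity) hint (τ ^ p)
  have hsub : {ω | τ ≤ Y ω ^ 2} ⊆ {ω | τ ^ p ≤ Y ω ^ (2 * p)} := fun ω (h : τ ≤ Y ω ^ 2) =>
    show τ ^ p ≤ Y ω ^ (2 * p) by rw [pow_mul]; exact pow_le_pow_left₀ hτ.le h p
  calc P {ω | τ ≤ Y ω ^ 2} ≤ P {ω | τ ^ p ≤ Y ω ^ (2 * p)} := measure_mono hsub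
    _ = ENNReal.ofReal (P.real {ω | τ ^ p ≤ Y ω ^ (2 * p)}) :=
        (ofReal_measureReal (measure_ne_top P _)).symm
    _ ≤ ENNReal.ofReal (C / τ ^ p) := by
        gcongr
        rw [le_div_iff₀ (by positivity), mul_comm]
        exact hmarkov.trans hC

lemma measure_exists_le_sqrt_sum_sq_le {n : ℕ} (Y : Ω → Matrix (Fin n) (Fin n) ℝ) {p : ℕ}
    {C t : ℝ} (ht : 0 < t) (hint : ∀ i j, i ≠ j → Integrable (fun ω => Y ω i j ^ (2 * p)) P)
    (hC : ∀ i j, i ≠ j → ∫ ω, Y ω i j ^ (2 * p) ∂P ≤ C) :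
    P {ω | ∃ j, t ≤ √(∑ i ∈ univ.erase j, Y ω i j ^ 2)} ≤
      ENNReal.ofReal (n ^ 2 * (C / (t ^ 2 / n) ^ p)) := by
  rcases n.eq_zero_or_pos with rfl | hn
  · simp
  set τ := t ^ 2 / n
  have hτ : 0 < τ := by positivity
  have hsub : {ω | ∃ j, t ≤ √(∑ i ∈ univ.erase j, Y ω i j ^ 2)} ⊆
      ⋃ j, ⋃ i, {ω | i ≠ j ∧ τ ≤ Y ω i j ^ 2} := fun ω ⟨j, hj⟩ => by
    obtain ⟨i, hij, hlt⟩ := exists_ne_div_lt_sq_of_le_sqrt_sum_sq (Y ω · j) j ht hj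
    exact Set.mem_iUnion₂.mpr ⟨j, i, hij, hlt.le⟩
  have hpair : ∀ i j, P {ω | i ≠ j ∧ τ ≤ Y ω i j ^ 2} ≤ ENNReal.ofReal (C / τ ^ p) := by
    intro i j
    by_cases hij : i = j
    · simp [hij]
    · exact (measure_mono fun ω h => h.2).trans
        (measure_le_sq_le_of_integral_pow_le hτ (hint i j hij) (hC i j hij))
  calc P {ω | ∃ j, t ≤ √(∑ i ∈ univ.erase j, Y ω i j ^ 2)}
      ≤ ∑ j, ∑ i, P {ω | i ≠ j ∧ τ ≤ Y ω i j ^ 2} :=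
        (measure_mono hsub).trans <| (measure_iUnion_fintype_le _ _).trans <|
          sum_le_sum fun j _ => measure_iUnion_fintype_le _ _
    _ ≤ ∑ _j : Fin n, ∑ _i : Fin n, ENNReal.ofReal (C / τ ^ p) := by
        gcongr with j _ i
        exact hpair i j
    _ = ENNReal.ofReal (n ^ 2 * (C / τ ^ p)) := by
        rw [ENNReal.ofReal_mul (by positivity)]
        simp [sq, mul_assoc]

end Tail

section Expansion

variable {d n lo L : ℕ} {c : ℕ → ℝ}

lemma Tval_div_natCast (k : ℕ) :
    Tval d n c k / n = c k * √(Nat.factorial k : ℝ) * ((√(n : ℝ))⁻¹ * (√(d : ℝ))⁻¹ ^ k) := by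
  have hdk : √((d : ℝ) ^ k) = √(d : ℝ) ^ k := by
    rw [← Real.sqrt_sq (by positivity : 0 ≤ √(d : ℝ) ^ k), ← pow_mul, pow_mul',
      Real.sq_sqrt (Nat.cast_nonneg d)]
  rcases (Nat.cast_nonneg n : (0 : ℝ) ≤ n).eq_or_lt with hn | hn
  · simp [Tval, ← hn]
  · rw [Tval, Real.sqrt_div (Nat.cast_nonneg n), hdk, inv_pow]
    field_simp
    rw [Real.sq_sqrt hn.le]

lemma Bmat_apply_of_ne (X : Matrix (Fin d) (Fin n) ℝ) {i j : Fin n} (hij : i ≠ j) :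
    Bmat d n lo L c X i j =
      ∑ μ : RIdx d lo L c, Tval d n c μ.1.card / n * ∏ a ∈ μ.1, X a i * X a j := by
  simp only [Bmat, Dmat, Tmat, Umat, Matrix.sub_apply, diagonal_apply_ne _ hij, sub_zero,
    mul_apply, transpose_apply, diagonal_apply, mul_ite, mul_zero, sum_ite_eq',
    mem_univ, if_true, prod_mul_distrib]
  refine sum_congr rfl fun μ _ => ?_
  have hsq : (√(n : ℝ))⁻¹ * (√(n : ℝ))⁻¹ = (n : ℝ)⁻¹ := by
    rw [← mul_inv, Real.mul_self_sqrt (Nat.cast_nonneg n)]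
  linear_combination (Tval d n c μ.1.card * (∏ a ∈ μ.1, X a i) * ∏ a ∈ μ.1, X a j) * hsq

lemma Bmat_apply_pow_of_ne (X : Matrix (Fin d) (Fin n) ℝ) {i j : Fin n} (hij : i ≠ j) (m : ℕ) :
    Bmat d n lo L c X i j ^ m =
      ∑ φ : Fin m → RIdx d lo L c, (∏ t, Tval d n c (φ t).1.card / n) *
        ∏ a, (X a i * X a j) ^ #{t | a ∈ (φ t).1} := by
  rw [Bmat_apply_of_ne X hij, ← Fin.prod_const, prod_univ_sum]
  refine sum_congr Fintype.piFinset_univ fun φ _ => ?_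
  rw [prod_mul_distrib, prod_prod_eq_prod_pow_card (fun t => (φ t).1)]

end Expansion

section EntryMoments

variable {Ω : Type*} [MeasurableSpace Ω] {P : Measure Ω} {μ0 : Measure ℝ} {d n : ℕ}
  {X : Ω → Matrix (Fin d) (Fin n) ℝ}

lemma iIndepFun_pow_entries_two_cols
    (hX : iIndepFun (fun (q : Fin d × Fin n) ω => X ω q.1 q.2) P) {i j : Fin n} (hij : i ≠ j)
    (e : Fin d → ℕ) :
    iIndepFun (fun (q : Fin d × Fin 2) ω => X ω q.1 (![i, j] q.2) ^ e q.1) P := by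
  have hinj : Function.Injective fun q : Fin d × Fin 2 => (q.1, ![i, j] q.2) := by
    rintro ⟨a, b⟩ ⟨a', b'⟩ h
    simp only [Prod.mk.injEq] at h
    obtain ⟨rfl, h⟩ := h
    fin_cases b <;> fin_cases b' <;> simp_all [eq_comm]
  exact (hX.precomp hinj).comp (fun q x => x ^ e q.1) fun q => by fun_prop

lemma integral_prod_mul_entries_pow (hmom : ∀ p : ℕ, Integrable (fun x => |x| ^ p) μ0)
    (hXm : ∀ a i, Measurable fun ω => X ω a i) (hXlaw : ∀ a i, P.map (fun ω => X ω a i) = μ0)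
    (hX : iIndepFun (fun (q : Fin d × Fin n) ω => X ω q.1 q.2) P)
    {i j : Fin n} (hij : i ≠ j) (e : Fin d → ℕ) :
    Integrable (fun ω => ∏ a, (X ω a i * X ω a j) ^ e a) P ∧
      ∫ ω, ∏ a, (X ω a i * X ω a j) ^ e a ∂P = ∏ a, (∫ x, x ^ e a ∂μ0) ^ 2 := by
  have hsplit : ∀ ω, ∏ a, (X ω a i * X ω a j) ^ e a =
      ∏ q : Fin d × Fin 2, X ω q.1 (![i, j] q.2) ^ e q.1 := fun ω => by
    simp [Fintype.prod_prod_type, Fin.prod_univ_two, mul_pow]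
  have hind := iIndepFun_pow_entries_two_cols hX hij e
  simp_rw [hsplit]
  refine ⟨?_, ?_⟩
  · simpa using hind.integrable_finsetProd (fun q => (hXm _ _).pow_const _)
      (fun q => integrable_pow_of_map_eq hmom (hXm _ _) (hXlaw _ _) _) univ
  · rw [hind.integral_fun_prod_eq_prod_integral
      (fun q => ((hXm _ _).pow_const _).aestronglyMeasurable)]
    simp [Fintype.prod_prod_type, integral_pow_of_map_eq (hXm _ _) (hXlaw _ _), sq]

end EntryMoments

section MomentBound

variable {d n lo L : ℕ} {c : ℕ → ℝ}

lemma abs_prod_Tval_div_le {m : ℕ} {K : ℝ}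
    (hK : ∀ k ≤ L, |c k| * √(Nat.factorial k : ℝ) ≤ K) (φ : Fin m → RIdx d lo L c) :
    |∏ t, Tval d n c (φ t).1.card / n| ≤
      K ^ m * ((√(n : ℝ))⁻¹ ^ m * (√(d : ℝ))⁻¹ ^ ∑ t, (φ t).1.card) := by
  rw [abs_prod]
  calc ∏ t, |Tval d n c (φ t).1.card / n|
      = ∏ t, |c (φ t).1.card| * √(Nat.factorial (φ t).1.card : ℝ) *
          ((√(n : ℝ))⁻¹ * (√(d : ℝ))⁻¹ ^ (φ t).1.card) := by
        simp only [Tval_div_natCast, abs_mul, abs_of_nonneg (Real.sqrt_nonneg _),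
          abs_of_nonneg (by positivity : 0 ≤ (√(n : ℝ))⁻¹ * (√(d : ℝ))⁻¹ ^ _)]
    _ ≤ ∏ t, K * ((√(n : ℝ))⁻¹ * (√(d : ℝ))⁻¹ ^ (φ t).1.card) := by
        gcongr with t
        exact hK _ (φ t).2.2.1
    _ = K ^ m * ((√(n : ℝ))⁻¹ ^ m * (√(d : ℝ))⁻¹ ^ ∑ t, (φ t).1.card) := by
        simp [prod_mul_distrib, prod_pow_eq_pow_sum]

lemma abs_prod_Tval_div_mul_prod_moment_le (hd : 1 ≤ d) {p : ℕ} {mom : ℕ → ℝ}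
    (h0 : mom 0 = 1) (h1 : mom 1 = 0) {M K : ℝ} (hM : ∀ e ≤ 2 * p, |mom e| ≤ M)
    (hK : ∀ k ≤ L, |c k| * √(Nat.factorial k : ℝ) ≤ K) (φ : Fin (2 * p) → RIdx d lo L c) :
    |(∏ t, Tval d n c (φ t).1.card / n) * ∏ a, mom #{t | a ∈ (φ t).1} ^ 2| ≤
      K ^ (2 * p) * ((n : ℝ) ^ p)⁻¹ *
        (M ^ 2 / d) ^ #(univ.biUnion fun t => (φ t).1) := by
  set A := univ.biUnion fun t => (φ t).1
  have hK0 : 0 ≤ K := (by positivity : 0 ≤ |c 0| * √(Nat.factorial 0 : ℝ)).trans (hK 0 L.zero_le)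
  by_cases hsingle : ∃ a, #{t | a ∈ (φ t).1} = 1
  · obtain ⟨a, ha⟩ := hsingle
    rw [prod_eq_zero (mem_univ a) (by rw [ha, h1, zero_pow two_ne_zero]),
      mul_zero, abs_zero]
    positivity
  push Not at hsingle
  have hmoments : |∏ a, mom #{t | a ∈ (φ t).1} ^ 2| ≤ (M ^ 2) ^ #A := by
    rw [← prod_subset (subset_univ A) fun a _ haA => by
      rw [card_eq_zero.mpr, h0, one_pow]
      exact filter_eq_empty_iff.mpr fun t _ hat =>
        haA (mem_biUnion.mpr ⟨t, mem_univ t, hat⟩)]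
    rw [abs_prod, ← prod_const]
    gcongr with a
    rw [abs_pow, ← sq_abs M]
    exact pow_le_pow_left₀ (abs_nonneg _)
      ((hM _ ((card_le_univ _).trans_eq (Fintype.card_fin _))).trans (le_abs_self M)) 2
  have hweights : (√(d : ℝ))⁻¹ ^ ∑ t, (φ t).1.card ≤ ((d : ℝ)⁻¹) ^ #A := by
    have hd1 : (√(d : ℝ))⁻¹ ≤ 1 :=
      inv_le_one_of_one_le₀ (Real.one_le_sqrt.mpr (by exact_mod_cast hd))
    calc (√(d : ℝ))⁻¹ ^ ∑ t, (φ t).1.card ≤ (√(d : ℝ))⁻¹ ^ (2 * #A) :=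
          pow_le_pow_of_le_one (by positivity) hd1
            (two_mul_card_biUnion_le_sum_card _ hsingle)
      _ = ((d : ℝ)⁻¹) ^ #A := by rw [pow_mul, inv_pow, Real.sq_sqrt (Nat.cast_nonneg d)]
  have hn : (√(n : ℝ))⁻¹ ^ (2 * p) = ((n : ℝ) ^ p)⁻¹ := by
    rw [pow_mul, inv_pow, Real.sq_sqrt (Nat.cast_nonneg n), inv_pow]
  rw [abs_mul]
  calc |∏ t, Tval d n c (φ t).1.card / n| * |∏ a, mom #{t | a ∈ (φ t).1} ^ 2|
      ≤ K ^ (2 * p) * ((√(n : ℝ))⁻¹ ^ (2 * p) * (√(d : ℝ))⁻¹ ^ ∑ t, (φ t).1.card) *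
          (M ^ 2) ^ #A :=
        mul_le_mul (abs_prod_Tval_div_le hK φ) hmoments (abs_nonneg _) (by positivity)
      _ ≤ K ^ (2 * p) * ((√(n : ℝ))⁻¹ ^ (2 * p) * ((d : ℝ)⁻¹) ^ #A) * (M ^ 2) ^ #A := by
        gcongr
      _ = K ^ (2 * p) * ((n : ℝ) ^ p)⁻¹ * (M ^ 2 / d) ^ #A := by
        rw [hn, div_eq_mul_inv, mul_pow]; ring

end MomentBound

theorem exists_integral_Bmat_apply_pow_le {Ω : Type*} [MeasurableSpace Ω] {P : Measure Ω}
    {μ0 : Measure ℝ} [IsProbabilityMeasure μ0] (hcent : ∫ x, x ∂μ0 = 0)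
    (hmom : ∀ p : ℕ, Integrable (fun x => |x| ^ p) μ0) (lo L : ℕ) (c : ℕ → ℝ) (p : ℕ) :
    ∃ C, 0 ≤ C ∧ ∀ (d n : ℕ) (X : Ω → Matrix (Fin d) (Fin n) ℝ), 1 ≤ d →
      (∀ a i, Measurable fun ω => X ω a i) → (∀ a i, P.map (fun ω => X ω a i) = μ0) →
      iIndepFun (fun (q : Fin d × Fin n) ω => X ω q.1 q.2) P → ∀ i j, i ≠ j →
      Integrable (fun ω => Bmat d n lo L c (X ω) i j ^ (2 * p)) P ∧
        ∫ ω, Bmat d n lo L c (X ω) i j ^ (2 * p) ∂P ≤ C / n ^ p := by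
  set mom : ℕ → ℝ := fun e => ∫ x, x ^ e ∂μ0
  set M := ∑ e ∈ range (2 * p + 1), |mom e|
  set K := ∑ k ∈ range (L + 1), |c k| * √(Nat.factorial k : ℝ)
  have hM : ∀ e ≤ 2 * p, |mom e| ≤ M := fun e he =>
    single_le_sum (f := fun e => |mom e|) (fun _ _ => abs_nonneg _)
      (mem_range.mpr (Nat.lt_succ_of_le he))
  have hK : ∀ k ≤ L, |c k| * √(Nat.factorial k : ℝ) ≤ K := fun k hk =>
    single_le_sum (f := fun k => |c k| * √(Nat.factorial k : ℝ)) (fun _ _ => by positivity)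
      (mem_range.mpr (Nat.lt_succ_of_le hk))
  have hK0 : 0 ≤ K := sum_nonneg fun _ _ => by positivity
  refine ⟨K ^ (2 * p) * Real.exp (2 ^ (2 * p) * M ^ 2), by positivity, ?_⟩
  intro d n X hd hXm hXlaw hX i j hij
  have hterm := fun φ : Fin (2 * p) → RIdx d lo L c =>
    integral_prod_mul_entries_pow hmom hXm hXlaw hX hij fun a => #{t | a ∈ (φ t).1}
  simp_rw [Bmat_apply_pow_of_ne _ hij]
  refine ⟨integrable_finsetSum _ fun φ _ => (hterm φ).1.const_mul _, ?_⟩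
  have hinj : Function.Injective fun (φ : Fin (2 * p) → RIdx d lo L c) t => (φ t).1 :=
    fun φ ψ h => funext fun t => Subtype.ext (congrFun h t)
  rw [integral_finsetSum _ fun φ _ => (hterm φ).1.const_mul _]
  calc ∑ φ : Fin (2 * p) → RIdx d lo L c, ∫ ω, (∏ t, Tval d n c (φ t).1.card / n) *
          ∏ a, (X ω a i * X ω a j) ^ #{t | a ∈ (φ t).1} ∂P
      = ∑ φ : Fin (2 * p) → RIdx d lo L c,
          (∏ t, Tval d n c (φ t).1.card / n) * ∏ a, mom #{t | a ∈ (φ t).1} ^ 2 := by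
        simp only [integral_const_mul, (hterm _).2, mom]
    _ ≤ ∑ φ : Fin (2 * p) → RIdx d lo L c, K ^ (2 * p) * ((n : ℝ) ^ p)⁻¹ *
          (M ^ 2 / d) ^ #(univ.biUnion fun t => (φ t).1) := by
        refine sum_le_sum fun φ _ =>
          (le_abs_self _).trans (abs_prod_Tval_div_mul_prod_moment_le hd ?_ ?_ hM hK φ)
        · simp [mom]
        · simpa [mom] using hcent
    _ ≤ K ^ (2 * p) * ((n : ℝ) ^ p)⁻¹ * (2 ^ (2 * p) * (M ^ 2 / d) + 1) ^ d := by
        rw [← mul_sum]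
        gcongr
        simpa using sum_pow_card_biUnion_le hinj (x := M ^ 2 / d) (by positivity)
    _ ≤ K ^ (2 * p) * ((n : ℝ) ^ p)⁻¹ * Real.exp (2 ^ (2 * p) * M ^ 2) := by
        gcongr
        rw [← mul_div_assoc]
        exact div_add_one_pow_le_exp d (by positivity)
    _ = K ^ (2 * p) * Real.exp (2 ^ (2 * p) * M ^ 2) / n ^ p := by ring

theorem bcolumn_norm_general
    {Ω : Type*} [MeasurableSpace Ω] (P : Measure Ω) [IsProbabilityMeasure P]
    (μ0 : Measure ℝ) [IsProbabilityMeasure μ0]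
    (hcent : ∫ x, x ∂μ0 = 0)
    (hmom : ∀ p : ℕ, Integrable (fun x => |x| ^ p) μ0)
    (ℓ : ℝ)
    (L : ℕ)
    (c : ℕ → ℝ)
    (Nf : ℕ → ℕ)
    (X : ∀ d : ℕ, Ω → Matrix (Fin d) (Fin (Nf d)) ℝ)
    (hXmeas : ∀ d a i, Measurable fun ω => X d ω a i)
    (hXlaw : ∀ d a i, Measure.map (fun ω => X d ω a i) P = μ0)
    (hXindep : ∀ d, iIndepFun
      (fun (pr : Fin d × Fin (Nf d)) ω => X d ω pr.1 pr.2) P)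
    :
    ∀ ε > (0 : ℝ), ∀ D > (0 : ℝ), ∃ C : ℝ, ∃ d₀ : ℕ, ∀ d ≥ d₀,
      P {ω | ∃ j : Fin (Nf d), (Nf d : ℝ) ^ ε ≤
          Real.sqrt (∑ i ∈ Finset.univ.erase j,
            (Bmat d (Nf d) (Nat.ceil ℓ) L c (X d ω) i j) ^ 2)} ≤
        ENNReal.ofReal (C * (Nf d : ℝ) ^ (-D)) := by
  intro ε hε D hD
  obtain ⟨p, hp⟩ : ∃ p : ℕ, D + 2 ≤ 2 * p * ε := by
    obtain ⟨p, hp⟩ := exists_nat_ge ((D + 2) / (2 * ε))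
    exact ⟨p, by rw [div_le_iff₀ (by positivity)] at hp; linarith⟩
  obtain ⟨C, hC0, hC⟩ := exists_integral_Bmat_apply_pow_le (P := P) hcent hmom ⌈ℓ⌉₊ L c p
  refine ⟨C, 1, fun d hd => ?_⟩
  rcases (Nf d).eq_zero_or_pos with hn | hn
  · have : IsEmpty (Fin (Nf d)) := by rw [hn]; infer_instance
    simp
  have hB := hC d (Nf d) (X d) hd (hXmeas d) (hXlaw d) (hXindep d)
  refine (measure_exists_le_sqrt_sum_sq_le (fun ω => Bmat d (Nf d) ⌈ℓ⌉₊ L c (X d ω))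
    (Real.rpow_pos_of_pos (by exact_mod_cast hn) ε) (fun i j hij => (hB i j hij).1)
    (fun i j hij => (hB i j hij).2)).trans ?_
  exact ENNReal.ofReal_le_ofReal (natCast_sq_mul_div_le_mul_rpow_neg _ p hC0 hD hp)

/-- Lemma 6.1 of the paper: `max_{j} ‖B_j‖ ≺ 1`, where `B_j` is
the `j`-th column of `B` with the `(j,j)` entry removed. -/
theorem bcolumn_norm
    {Ω : Type*} [MeasurableSpace Ω] (P : Measure Ω) [IsProbabilityMeasure P]
    (μ0 : Measure ℝ) [IsProbabilityMeasure μ0]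
    (hcent : ∫ x, x ∂μ0 = 0) (hvar : ∫ x, x ^ 2 ∂μ0 = 1)
    (hmom : ∀ p : ℕ, Integrable (fun x => |x| ^ p) μ0)
    (ℓ : ℝ) (hℓ : 0 < ℓ)
    (L : ℕ) (hLpos : 0 < L) (hL : Nat.ceil ℓ ≤ L)
    (c : ℕ → ℝ) (hc : ∃ k, Nat.ceil ℓ ≤ k ∧ k ≤ L ∧ c k ≠ 0)
    (Nf : ℕ → ℕ)
    (hNf : ∃ C₁ C₂ : ℝ, 0 < C₁ ∧ ∀ d : ℕ, 1 ≤ d →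
      C₁ * (d : ℝ) ^ ℓ ≤ (Nf d : ℝ) ∧ (Nf d : ℝ) ≤ C₂ * (d : ℝ) ^ ℓ)
    (X : ∀ d : ℕ, Ω → Matrix (Fin d) (Fin (Nf d)) ℝ)
    (hXmeas : ∀ d a i, Measurable fun ω => X d ω a i)
    (hXlaw : ∀ d a i, Measure.map (fun ω => X d ω a i) P = μ0)
    (hXindep : ∀ d, iIndepFun
      (fun (pr : Fin d × Fin (Nf d)) ω => X d ω pr.1 pr.2) P)
    :
    ∀ ε > (0 : ℝ), ∀ D > (0 : ℝ), ∃ C : ℝ, ∃ d₀ : ℕ, ∀ d ≥ d₀,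
      P {ω | ∃ j : Fin (Nf d), (Nf d : ℝ) ^ ε ≤
          Real.sqrt (∑ i ∈ Finset.univ.erase j,
            (Bmat d (Nf d) (Nat.ceil ℓ) L c (X d ω) i j) ^ 2)} ≤
        ENNReal.ofReal (C * (Nf d : ℝ) ^ (-D)) :=
  bcolumn_norm_general P μ0 hcent hmom ℓ L c Nf X hXmeas hXlaw hXindep
end
end
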